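/- Let N ≥ 3 be an integer, t, g real numbers, and V : {1,…,N} → ℝ. Suppose ψ ∈ ℂ^N with ∑_{i=1}^N |ψ_i|² = 1 satisfies t(ψ_{i+1} + ψ_{i−1}) + V_i ψ_i + g|ψ_i|²ψ_i = Eψ_i for all i with indices taken modulo N (periodic boundary condition), for some real E. Let σ(H_0^P) be the spectrum of the linear Hamiltonian with periodic boundary conditions and set U_max = max_{1 ≤ i ≤ N} |ψ_i|². Then dist(E, σ(H_0^P)) ≤ |g|·U_max. -/

import Mathlib

/-! Put `r := (H₀ᴾ - E) ψ`. The equation says `r i = -g |ψ i|² ψ i`, so coordinatewise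
`‖r i‖ ≤ |g| U_max ‖ψ i‖` and hence `‖r‖ ≤ |g| U_max`. In an orthonormal eigenbasis of the
Hermitian `H₀ᴾ` each coordinate of `r` is `λₖ - E` times that of `ψ`, and `|λₖ - E|` is at least
`dist(E, σ(H₀ᴾ))`, so `‖r‖ ≥ dist(E, σ(H₀ᴾ)) ‖ψ‖ = dist(E, σ(H₀ᴾ))`. -/

open Matrix Filter

noncomputable section

/-- Successor site with periodic boundary conditions (index mod `N`). -/
def pSucc {N : ℕ} (i : Fin N) : Fin N :=
  ⟨(i.1 + 1) % N, Nat.mod_lt _ (Nat.lt_of_le_of_lt (Nat.zero_le _) i.isLt)⟩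

/-- Predecessor site with periodic boundary conditions (index mod `N`). -/
def pPred {N : ℕ} (i : Fin N) : Fin N :=
  ⟨(i.1 + (N - 1)) % N, Nat.mod_lt _ (Nat.lt_of_le_of_lt (Nat.zero_le _) i.isLt)⟩

/-- The linear Hamiltonian `H_0^P` with periodic boundary conditions:
`(H ψ)_i = t (ψ_{i+1} + ψ_{i-1}) + V_i ψ_i`, indices mod `N`. -/
def periodicH (N : ℕ) (t : ℝ) (V : Fin N → ℝ) : Matrix (Fin N) (Fin N) ℂ :=
  Matrix.of fun i j =>
    (if j = pSucc i then (t : ℂ) else 0) + (if j = pPred i then (t : ℂ) else 0) +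
      (if j = i then (V i : ℂ) else 0)

/-- The linear Hamiltonian `H_0^D` with Dirichlet boundary conditions
(convention `ψ_0 = ψ_{N+1} = 0`). -/
def dirichletH (N : ℕ) (t : ℝ) (V : Fin N → ℝ) : Matrix (Fin N) (Fin N) ℂ :=
  Matrix.of fun i j =>
    (if i.1 + 1 = j.1 then (t : ℂ) else 0) + (if j.1 + 1 = i.1 then (t : ℂ) else 0) +
      (if j = i then (V i : ℂ) else 0)

/-- Sum of the neighboring values `ψ_{i+1} + ψ_{i-1}` with the Dirichlet
convention `ψ_0 = ψ_{N+1} = 0`. -/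
def dNbr {N : ℕ} (ψ : Fin N → ℂ) (i : Fin N) : ℂ :=
  (if h : i.1 + 1 < N then ψ ⟨i.1 + 1, h⟩ else 0) +
    (if 0 < i.1 then ψ ⟨i.1 - 1, Nat.lt_of_le_of_lt (Nat.sub_le _ _) i.isLt⟩ else 0)

/-- The stationary nonlinear Schrödinger equation with periodic boundary conditions:
`t (ψ_{i+1} + ψ_{i-1}) + V_i ψ_i + g |ψ_i|² ψ_i = E ψ_i`, indices mod `N`. -/
def PeriodicNLS (N : ℕ) (t g : ℝ) (V : Fin N → ℝ) (ψ : Fin N → ℂ) (E : ℝ) : Prop :=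
  ∀ i : Fin N,
    (t : ℂ) * (ψ (pSucc i) + ψ (pPred i)) + (V i : ℂ) * ψ i +
        (g : ℂ) * ((‖ψ i‖ : ℂ)) ^ 2 * ψ i = (E : ℂ) * ψ i

/-- The stationary nonlinear Schrödinger equation with Dirichlet boundary conditions:
`t (ψ_{i+1} + ψ_{i-1}) + V_i ψ_i + g |ψ_i|² ψ_i = E ψ_i`, with `ψ_0 = ψ_{N+1} = 0`. -/
def DirichletNLS (N : ℕ) (t g : ℝ) (V : Fin N → ℝ) (ψ : Fin N → ℂ) (E : ℝ) : Prop :=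
  ∀ i : Fin N,
    (t : ℂ) * dNbr ψ i + (V i : ℂ) * ψ i +
        (g : ℂ) * ((‖ψ i‖ : ℂ)) ^ 2 * ψ i = (E : ℂ) * ψ i

/-- Normalization `∑ i |ψ_i|² = 1`. -/
def Normalized {N : ℕ} (ψ : Fin N → ℂ) : Prop :=
  ∑ i, ‖ψ i‖ ^ 2 = 1

/-- `e` lists the eigenvalues of the Hermitian matrix `A` in nondecreasing order,
counted with multiplicity. -/
def IsSortedEigenvalues {N : ℕ} {A : Matrix (Fin N) (Fin N) ℂ} (hA : A.IsHermitian)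
    (e : Fin N → ℝ) : Prop :=
  Monotone e ∧ ∃ σ : Equiv.Perm (Fin N), ∀ i, e i = hA.eigenvalues (σ i)

open Metric WithLp

theorem PiLp.norm_mono_of_L2 {ι : Type*} [Fintype ι] {β : ι → Type*}
    [∀ i, SeminormedAddCommGroup (β i)] {x y : PiLp 2 β} (h : ∀ i, ‖x i‖ ≤ ‖y i‖) :
    ‖x‖ ≤ ‖y‖ := by
  rw [PiLp.norm_eq_of_L2, PiLp.norm_eq_of_L2]
  gcongr with i
  exact h i

theorem LinearMap.IsSymmetric.infDist_eigenvalues_mul_norm_le {𝕜 E : Type*} [RCLike 𝕜]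
    [NormedAddCommGroup E] [InnerProductSpace 𝕜 E] [FiniteDimensional 𝕜 E] {T : E →ₗ[𝕜] E}
    (hT : T.IsSymmetric) {n : ℕ} (hn : Module.finrank 𝕜 E = n) (μ : ℝ) (v : E) :
    infDist μ (Set.range (hT.eigenvalues hn)) * ‖v‖ ≤ ‖T v - (μ : 𝕜) • v‖ := by
  set b := hT.eigenvectorBasis hn
  set d := infDist μ (Set.range (hT.eigenvalues hn))
  have hd : ∀ i, d ≤ |hT.eigenvalues hn i - μ| := fun i => by
    rw [← Real.dist_eq, dist_comm]
    exact infDist_le_dist_of_mem (Set.mem_range_self i)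
  have hcoord : ∀ i, b.repr (T v - (μ : 𝕜) • v) i =
      ((hT.eigenvalues hn i - μ : ℝ) : 𝕜) * b.repr v i := fun i => by
    rw [map_sub, map_smul, PiLp.sub_apply, PiLp.smul_apply, hT.eigenvectorBasis_apply_self_apply,
      smul_eq_mul, RCLike.ofReal_sub, sub_mul]
  calc d * ‖v‖ = ‖d • b.repr v‖ := by
        rw [norm_smul, b.repr.norm_map, Real.norm_of_nonneg infDist_nonneg]
    _ ≤ ‖b.repr (T v - (μ : 𝕜) • v)‖ := PiLp.norm_mono_of_L2 fun i => by
        rw [PiLp.smul_apply, hcoord, norm_smul, norm_mul, RCLike.norm_ofReal,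
          Real.norm_of_nonneg infDist_nonneg]
        exact mul_le_mul_of_nonneg_right (hd i) (norm_nonneg _)
    _ = ‖T v - (μ : 𝕜) • v‖ := b.repr.norm_map _

theorem Matrix.IsHermitian.infDist_eigenvalues_mul_norm_le {𝕜 n : Type*} [RCLike 𝕜] [Fintype n]
    [DecidableEq n] {A : Matrix n n 𝕜} (hA : A.IsHermitian) (μ : ℝ) (v : n → 𝕜) :
    infDist μ (Set.range hA.eigenvalues) * ‖toLp 2 v‖ ≤ ‖toLp 2 (A *ᵥ v - (μ : 𝕜) • v)‖ := by
  have hrange : Set.range hA.eigenvalues = Set.range hA.eigenvalues₀ :=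
    (Equiv.surjective _).range_comp _
  rw [hrange]
  exact (isSymmetric_toEuclideanLin_iff.mpr hA).infDist_eigenvalues_mul_norm_le _ μ (toLp 2 v)

theorem periodicH_mulVec {N : ℕ} (t : ℝ) (V : Fin N → ℝ) (ψ : Fin N → ℂ) (i : Fin N) :
    (periodicH N t V *ᵥ ψ) i = t * (ψ (pSucc i) + ψ (pPred i)) + V i * ψ i := by
  simp only [periodicH, mulVec, dotProduct, Matrix.of_apply, add_mul, ite_mul, zero_mul,
    Finset.sum_add_distrib, Finset.sum_ite_eq', Finset.mem_univ, if_true]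
  ring

theorem PeriodicNLS.periodicH_mulVec_sub_smul {N : ℕ} {t g : ℝ} {V : Fin N → ℝ} {ψ : Fin N → ℂ}
    {E : ℝ} (hsol : PeriodicNLS N t g V ψ E) (i : Fin N) :
    (periodicH N t V *ᵥ ψ - (E : ℂ) • ψ) i = -((g : ℂ) * ((‖ψ i‖ : ℂ)) ^ 2 * ψ i) := by
  rw [Pi.sub_apply, Pi.smul_apply, smul_eq_mul, periodicH_mulVec]
  linear_combination hsol i

theorem stmt_8_general (N : ℕ) (t g : ℝ) (V : Fin N → ℝ)
    (hH : (periodicH N t V).IsHermitian)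
    (ψ : Fin N → ℂ) (hnorm : Normalized ψ) (E : ℝ)
    (hsol : PeriodicNLS N t g V ψ E) :
    Metric.infDist E (Set.range hH.eigenvalues) ≤
      |g| * (⨆ i : Fin N, ‖ψ i‖ ^ 2) := by
  set U := ⨆ i : Fin N, ‖ψ i‖ ^ 2
  have hU : ∀ i, ‖ψ i‖ ^ 2 ≤ U := le_ciSup (Set.finite_range _).bddAbove
  have hc : 0 ≤ |g| * U := mul_nonneg (abs_nonneg g) (Real.iSup_nonneg fun i => sq_nonneg _)
  have hunit : ‖toLp 2 ψ‖ = 1 := by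
    rw [EuclideanSpace.norm_eq, ← Real.sqrt_one]
    exact congrArg Real.sqrt hnorm
  have hres : ‖toLp 2 (periodicH N t V *ᵥ ψ - (E : ℂ) • ψ)‖ ≤ ‖(|g| * U) • toLp 2 ψ‖ :=
    PiLp.norm_mono_of_L2 fun i => by
      rw [PiLp.toLp_apply, hsol.periodicH_mulVec_sub_smul, PiLp.smul_apply, PiLp.toLp_apply,
        norm_neg, norm_mul, norm_mul, norm_pow, norm_smul, Complex.norm_real, Complex.norm_real,
        norm_norm, Real.norm_eq_abs, Real.norm_of_nonneg hc]
      gcongr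
      exact hU i
  calc Metric.infDist E (Set.range hH.eigenvalues)
        = Metric.infDist E (Set.range hH.eigenvalues) * ‖toLp 2 ψ‖ := by rw [hunit, mul_one]
    _ ≤ ‖toLp 2 (periodicH N t V *ᵥ ψ - (E : ℂ) • ψ)‖ := hH.infDist_eigenvalues_mul_norm_le E ψ
    _ ≤ ‖(|g| * U) • toLp 2 ψ‖ := hres
    _ = |g| * U := by rw [norm_smul, hunit, mul_one, Real.norm_of_nonneg hc]

/-- key estimate of Theorem 2, periodic boundary conditions:
a normalized periodic solution with eigenenergy `E` satisfies
`dist(E, σ(H_0^P)) ≤ |g|·U_max`. -/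
theorem stmt_8 (N : ℕ) (hN : 3 ≤ N) (t g : ℝ) (V : Fin N → ℝ)
    (hH : (periodicH N t V).IsHermitian)
    (ψ : Fin N → ℂ) (hnorm : Normalized ψ) (E : ℝ)
    (hsol : PeriodicNLS N t g V ψ E) :
    Metric.infDist E (Set.range hH.eigenvalues) ≤
      |g| * (⨆ i : Fin N, ‖ψ i‖ ^ 2) :=
  stmt_8_general N t g V hH ψ hnorm E hsol
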